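/- arXiv:2602.16332 — 4 statements merged into one kernel-verified Lean document; each statement's English description precedes it below -/
import Mathlib

section
/- Let k be a field and A a finite-dimensional semisimple k-algebra. Then A is symmetric: there exists a k-linear map σ : A → k such that σ(ab) = σ(ba) for all a, b ∈ A, and such that for every a ∈ A, if σ(ab) = 0 for all b ∈ A then a = 0. -/
/-!
By Wedderburn–Artin, `A` is a finite product of matrix algebras over finite-dimensional division
algebras, and symmetric algebras are stable under isomorphism, finite products (sum of the forms)
and matrix algebras (`σ ∘ trace`). On a division algebra every nonzero trace form is
nondegenerate, so it remains to see that the commutators of a nonzero finite-dimensional algebra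
`B` do not span it. Over the algebraic closure `K` of `k`, Schur's lemma and Jacobson density make
`K ⊗ B` act surjectively on `End_K S` for a simple `K ⊗ B`-module `S`, so the trace on `S` is a
nonzero trace form on `K ⊗ B`; restricting it to `B` and composing with a suitable `k`-linear
functional on `K` gives one on `B`.
-/

open TensorProduct

theorem LinearMap.trace_surjective (R M : Type*) [CommRing R] [AddCommGroup M] [Module R M]
    [Module.Free R M] [Module.Finite R M] [Nontrivial M] :
    Function.Surjective (LinearMap.trace R M) := by
  classical
  let b := Module.Free.chooseBasis R M
  have : Nonempty (Module.Free.ChooseBasisIndex R M) := b.index_nonempty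
  intro r
  obtain ⟨m, hm⟩ := Matrix.trace_surjective (n := Module.Free.ChooseBasisIndex R M) r
  exact ⟨(LinearMap.toMatrix b b).symm m, by simp [LinearMap.trace_eq_matrix_trace R b, hm]⟩

section
variable {K C S : Type*} [Field K] [IsAlgClosed K] [Ring C] [Algebra K C]
  [AddCommGroup S] [Module K S] [Module C S] [IsScalarTower K C S]
  [IsSimpleModule C S] [FiniteDimensional K S]

theorem IsSimpleModule.lsmul_surjective_of_isAlgClosed :
    Function.Surjective (Algebra.lsmul K K S : C →ₐ[K] Module.End K S) := by
  have hschur := IsSimpleModule.algebraMap_end_bijective_of_isAlgClosed (A := C) (V := S) K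
  have : Module.Finite (Module.End C S) S := .of_restrictScalars_finite K _ S
  intro f
  let f' : Module.End (Module.End C S) S :=
    { toFun := f
      map_add' := f.map_add
      map_smul' := fun g s => by
        obtain ⟨t, rfl⟩ := hschur.2 g
        exact f.map_smul t s }
  obtain ⟨c, hc⟩ := Module.Finite.toModuleEnd_moduleEnd_surjective f'
  exact ⟨c, LinearMap.ext fun s => congr($hc s)⟩

end

theorem exists_traceForm_ne_zero_of_isAlgClosed (K C : Type*) [Field K] [IsAlgClosed K] [Ring C]
    [Algebra K C] [FiniteDimensional K C] [Nontrivial C] :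
    ∃ T : C →ₗ[K] K, T ≠ 0 ∧ ∀ c d, T (c * d) = T (d * c) := by
  have := IsArtinianRing.of_finite K C
  obtain ⟨S, hS⟩ := IsAtomic.exists_atom (Submodule C C)
  have := isSimpleModule_iff_isAtom.2 hS
  have := IsSimpleModule.nontrivial C S
  let T := LinearMap.trace K S ∘ₗ (Algebra.lsmul K K S : C →ₐ[K] Module.End K S).toLinearMap
  have hT : Function.Surjective T :=
    (LinearMap.trace_surjective K S).comp IsSimpleModule.lsmul_surjective_of_isAlgClosed
  refine ⟨T, fun h => ?_, fun c d => ?_⟩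
  · obtain ⟨c, hc⟩ := hT 1
    simp [h] at hc
  · simp only [T, LinearMap.comp_apply, AlgHom.toLinearMap_apply, map_mul]
    exact LinearMap.trace_mul_comm K _ _

theorem exists_traceForm_ne_zero (k A : Type*) [Field k] [Ring A] [Algebra k A]
    [FiniteDimensional k A] [Nontrivial A] :
    ∃ σ : A →ₗ[k] k, σ ≠ 0 ∧ ∀ a b, σ (a * b) = σ (b * a) := by
  let K := AlgebraicClosure k
  have : Nontrivial (K ⊗[k] A) := Module.nontrivial_of_finrank_pos (R := K) <| by
    rw [Module.finrank_baseChange]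
    exact Module.finrank_pos
  obtain ⟨T, hT0, hT⟩ := exists_traceForm_ne_zero_of_isAlgClosed K (K ⊗[k] A)
  let μ : A →ₗ[k] K := (LinearMap.liftBaseChangeEquiv K).symm T
  have hμ : ∀ a b, μ (a * b) = μ (b * a) := fun a b => by
    simpa [μ] using hT (1 ⊗ₜ a) (1 ⊗ₜ b)
  obtain ⟨a, ha⟩ : ∃ a, μ a ≠ 0 := by
    by_contra! h
    exact hT0 ((LinearMap.liftBaseChangeEquiv K).symm.map_eq_zero_iff.1 (LinearMap.ext h))
  obtain ⟨φ, hφ⟩ : ∃ φ : Module.Dual k K, φ (μ a) ≠ 0 := by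
    by_contra! h
    exact ha ((Module.forall_dual_apply_eq_zero_iff k _).1 h)
  refine ⟨φ ∘ₗ μ, fun h => hφ congr($h a), fun a b => ?_⟩
  simp only [LinearMap.comp_apply, hμ]

structure IsSymmetrisingForm {k A : Type*} [Field k] [Ring A] [Algebra k A] (σ : A →ₗ[k] k) :
    Prop where
  map_mul_comm : ∀ a b, σ (a * b) = σ (b * a)
  eq_zero_of_forall_map_mul : ∀ a, (∀ b, σ (a * b) = 0) → a = 0

def Algebra.IsSymmetric (k A : Type*) [Field k] [Ring A] [Algebra k A] : Prop :=
  ∃ σ : A →ₗ[k] k, IsSymmetrisingForm σ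

namespace Algebra.IsSymmetric

variable {k : Type*} [Field k]

theorem of_algEquiv {A B : Type*} [Ring A] [Algebra k A] [Ring B] [Algebra k B]
    (e : A ≃ₐ[k] B) (hB : Algebra.IsSymmetric k B) : Algebra.IsSymmetric k A := by
  obtain ⟨σ, hσ⟩ := hB
  refine ⟨σ ∘ₗ e.toLinearMap, fun a b => ?_, fun a ha => ?_⟩
  · simpa using hσ.map_mul_comm (e a) (e b)
  · refine e.injective ((hσ.eq_zero_of_forall_map_mul (e a) fun b => ?_).trans e.map_zero.symm)
    simpa using ha (e.symm b)

theorem pi {ι : Type*} [Fintype ι] {A : ι → Type*} [∀ i, Ring (A i)] [∀ i, Algebra k (A i)]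
    (h : ∀ i, Algebra.IsSymmetric k (A i)) : Algebra.IsSymmetric k (∀ i, A i) := by
  classical
  choose σ hσ using h
  refine ⟨∑ i, σ i ∘ₗ LinearMap.proj i, fun a b => ?_, fun a ha => funext fun i => ?_⟩
  · simp [(hσ _).map_mul_comm]
  · refine (hσ i).eq_zero_of_forall_map_mul (a i) fun c => ?_
    have := ha (Pi.single i c)
    rw [LinearMap.sum_apply, Fintype.sum_eq_single i fun j hj => by simp [hj]] at this
    simpa using this

theorem matrix {n A : Type*} [Fintype n] [DecidableEq n] [Ring A] [Algebra k A]
    (h : Algebra.IsSymmetric k A) : Algebra.IsSymmetric k (Matrix n n A) := by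
  obtain ⟨σ, hσ⟩ := h
  refine ⟨σ ∘ₗ Matrix.traceLinearMap n k A, fun M N => ?_, fun M hM => ?_⟩
  · simp only [LinearMap.comp_apply, Matrix.traceLinearMap_apply, Matrix.trace, Matrix.diag,
      Matrix.mul_apply, map_sum, hσ.map_mul_comm (M _ _)]
    exact Finset.sum_comm
  · ext i j
    refine hσ.eq_zero_of_forall_map_mul (M i j) fun c => ?_
    simpa [Matrix.trace_mul_single] using hM (Matrix.single j i c)

theorem of_divisionRing (D : Type*) [DivisionRing D] [Algebra k D] [FiniteDimensional k D] :
    Algebra.IsSymmetric k D := by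
  obtain ⟨σ, hσ0, hσ⟩ := exists_traceForm_ne_zero k D
  refine ⟨σ, hσ, fun a ha => ?_⟩
  by_contra h
  exact hσ0 (LinearMap.ext fun c => by simpa [mul_inv_cancel_left₀ h] using ha (a⁻¹ * c))

end Algebra.IsSymmetric

/-- Every finite-dimensional semisimple algebra over a field is symmetric:
it admits a symmetrising form, i.e. a `k`-linear map `σ : A → k` with
`σ (a * b) = σ (b * a)` for all `a b`, and such that `σ (a * b) = 0` for all `b`
implies `a = 0`. -/
theorem semisimple_algebra_is_symmetric
    (k : Type*) [Field k] (A : Type*) [Ring A] [Algebra k A]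
    [FiniteDimensional k A] [IsSemisimpleRing A] :
    ∃ σ : A →ₗ[k] k,
      (∀ a b : A, σ (a * b) = σ (b * a)) ∧
      (∀ a : A, (∀ b : A, σ (a * b) = 0) → a = 0) := by
  obtain ⟨n, D, d, _, _, _, -, ⟨e⟩⟩ :=
    IsSemisimpleRing.exists_algEquiv_pi_matrix_divisionRing_finite k A
  have hD : Algebra.IsSymmetric k (Π i, Matrix (Fin (d i)) (Fin (d i)) (D i)) :=
    .pi fun i => (Algebra.IsSymmetric.of_divisionRing (D i)).matrix
  obtain ⟨σ, hσ⟩ := hD.of_algEquiv e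
  exact ⟨σ, hσ.map_mul_comm, hσ.eq_zero_of_forall_map_mul⟩
end

section
/- Let k be a field and B a division ring which is a finite-dimensional k-algebra. Then B is symmetric: there exists a k-linear map σ : B → k such that σ(ab) = σ(ba) for all a, b ∈ B, and such that for every a ∈ B, if σ(ab) = 0 for all b ∈ B then a = 0. -/
/-!
A nonzero linear form `σ` on a division ring is automatically nondegenerate: if `a ≠ 0` and
`σ c ≠ 0`, then `σ (a * (a⁻¹ * c)) ≠ 0`. So it suffices to find a nonzero `k`-linear form
vanishing on commutators. Over its centre `Z`, the algebra `B` is Azumaya: the map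
`B ⊗_Z Bᵐᵒᵖ → End_Z B`, `a ⊗ b ↦ (x ↦ a * x * b)`, is injective by an Artin–Whaples
independence argument, hence bijective by counting dimensions. As the trace on `End_Z B`
is nonzero, some form `x ↦ tr (y ↦ x * y * b)` is nonzero; it is symmetric because left and
right multiplications commute. Composing it with a suitable `k`-linear form on `Z` gives `σ`.
-/

open TensorProduct LinearMap MulOpposite

instance Subring.isCentral_center (B : Type*) [Ring B] :
    Algebra.IsCentral (Subring.center B) B where
  out x hx := ⟨⟨x, Subring.mem_center_iff.2 (Subalgebra.mem_center_iff.1 hx)⟩, rfl⟩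

theorem eq_zero_of_forall_sum_mul_mul_eq_zero {Z B ι : Type*} [CommRing Z]
    [DivisionRing B] [Algebra Z B] [Algebra.IsCentral Z B] {b : ι → B}
    (hb : LinearIndependent Z b) (s : Finset ι) (a : ι → B)
    (h : ∀ x, ∑ i ∈ s, a i * x * b i = 0) : ∀ i ∈ s, a i = 0 := by
  classical
  induction s using Finset.strongInduction generalizing a with
  | H s ih =>
  by_contra! ⟨i₀, hi₀, ha⟩
  set c : ι → B := fun i => (a i₀)⁻¹ * a i
  have hc₀ : c i₀ = 1 := inv_mul_cancel₀ ha
  have hc (x : B) : ∑ i ∈ s, c i * x * b i = 0 := by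
    rw [show ∑ i ∈ s, c i * x * b i = (a i₀)⁻¹ * ∑ i ∈ s, a i * x * b i by
      simp only [c, Finset.mul_sum, mul_assoc], h, mul_zero]
  -- The commutators `c i * y - y * c i` satisfy a relation without the term `i₀`, so vanish.
  have hc_comm : ∀ i ∈ s, ∀ y, y * c i = c i * y := by
    intro i hi y
    have hrel (x : B) : ∑ j ∈ s.erase i₀, (c j * y - y * c j) * x * b j = 0 := by
      rw [Finset.sum_erase _ (by simp [hc₀]),
        show ∑ j ∈ s, (c j * y - y * c j) * x * b j
            = ∑ j ∈ s, c j * (y * x) * b j - y * ∑ j ∈ s, c j * x * b j by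
          simp only [Finset.mul_sum, ← Finset.sum_sub_distrib, sub_mul, mul_assoc],
        hc, hc, mul_zero, sub_zero]
    by_cases hii₀ : i = i₀
    · simp [hii₀, hc₀]
    · exact (sub_eq_zero.1 (ih _ (Finset.erase_ssubset hi₀) _ hrel i
        (Finset.mem_erase.2 ⟨hii₀, hi⟩))).symm
  choose! z hz using fun i hi => (Algebra.IsCentral.mem_center_iff Z).1
    (Subalgebra.mem_center_iff.2 (hc_comm i hi))
  have hz₀ : z i₀ = 0 := by
    refine linearIndependent_iff'.1 hb s z ?_ i₀ hi₀
    rw [← hc 1]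
    exact Finset.sum_congr rfl fun i hi => by rw [Algebra.smul_def, ← hz i hi, mul_one]
  simpa [hz₀, hc₀] using hz i₀ hi₀

theorem AlgHom.mulLeftRight_injective (Z B : Type*) [Field Z] [DivisionRing B] [Algebra Z B]
    [Algebra.IsCentral Z B] : Function.Injective (AlgHom.mulLeftRight Z B) := by
  classical
  let e := (Module.Free.chooseBasis Z B).map (opLinearEquiv Z)
  have he : LinearIndependent Z (MulOpposite.unop ∘ e) := by
    simpa [e, Function.comp_def] using (Module.Free.chooseBasis Z B).linearIndependent
  rw [injective_iff_map_eq_zero]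
  intro t ht
  obtain ⟨c, rfl⟩ := (equivFinsuppOfBasisRight e).symm.surjective t
  have hc (x : B) : ∑ j ∈ c.support, c j * x * MulOpposite.unop (e j) = 0 := by
    simpa [equivFinsuppOfBasisRight_symm, Finsupp.sum, map_sum] using congr($ht x)
  suffices c = 0 by simp [this]
  ext j
  by_cases hj : j ∈ c.support
  · exact eq_zero_of_forall_sum_mul_mul_eq_zero he _ _ hc j hj
  · exact Finsupp.notMem_support_iff.1 hj

instance IsAzumaya.of_divisionRing (Z B : Type*) [Field Z] [DivisionRing B] [Algebra Z B]
    [Algebra.IsCentral Z B] [FiniteDimensional Z B] : IsAzumaya Z B where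
  bij := by
    have hinj := AlgHom.mulLeftRight_injective Z B
    refine ⟨hinj, (injective_iff_surjective_of_finrank_eq_finrank ?_
      (f := (AlgHom.mulLeftRight Z B).toLinearMap)).1 hinj⟩
    rw [Module.finrank_tensorProduct, Module.finrank_linearMap, (opLinearEquiv Z).finrank_eq]

theorem IsAzumaya.exists_trace_mulLeftRight_ne_zero (Z B : Type*) [Field Z] [Ring B]
    [Algebra Z B] [Nontrivial B] [IsAzumaya Z B] :
    ∃ (a : B) (b : Bᵐᵒᵖ), trace Z B (AlgHom.mulLeftRight Z B (a ⊗ₜ b)) ≠ 0 := by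
  obtain ⟨v, hv⟩ := exists_ne (0 : B)
  obtain ⟨φ, hφ⟩ := Module.Projective.exists_dual_ne_zero Z hv
  obtain ⟨t, ht⟩ := (AlgHom.mulLeftRight_bij (R := Z) (A := B)).2 (φ.smulRight v)
  by_contra! h
  have htrace : trace Z B ∘ₗ (AlgHom.mulLeftRight Z B).toLinearMap = 0 :=
    TensorProduct.ext' fun a b => by simpa using h a b
  apply hφ
  rw [← trace_smulRight, ← ht]
  exact congr($htrace t)

theorem trace_mulLeftRight_mul_comm (R A : Type*) [CommRing R] [Ring A] [Algebra R A]
    [Module.Free R A] [Module.Finite R A] (x y : A) (b : Aᵐᵒᵖ) :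
    trace R A (AlgHom.mulLeftRight R A ((x * y) ⊗ₜ b)) =
      trace R A (AlgHom.mulLeftRight R A ((y * x) ⊗ₜ b)) := by
  have hxy : (x * y) ⊗ₜ[R] b = (x ⊗ₜ 1) * (y ⊗ₜ b) := by simp
  have hyx : (y * x) ⊗ₜ[R] b = (y ⊗ₜ b) * (x ⊗ₜ 1) := by simp
  rw [hxy, hyx, map_mul (AlgHom.mulLeftRight R A), map_mul (AlgHom.mulLeftRight R A),
    trace_mul_comm]

theorem IsAzumaya.exists_linearMap_mul_comm_ne_zero (Z B : Type*) [Field Z] [Ring B]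
    [Algebra Z B] [Nontrivial B] [IsAzumaya Z B] :
    ∃ T : B →ₗ[Z] Z, (∀ x y, T (x * y) = T (y * x)) ∧ ∃ a, T a ≠ 0 := by
  obtain ⟨a, b, hab⟩ := exists_trace_mulLeftRight_ne_zero Z B
  exact ⟨trace Z B ∘ₗ (AlgHom.mulLeftRight Z B).toLinearMap ∘ₗ
      (TensorProduct.mk Z B Bᵐᵒᵖ).flip b,
    fun x y => trace_mulLeftRight_mul_comm Z B x y b, a, hab⟩

theorem DivisionRing.eq_zero_of_forall_apply_mul_eq_zero {B M : Type*} [DivisionRing B] [Zero M]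
    {σ : B → M} {c : B} (hc : σ c ≠ 0) {a : B} (h : ∀ b, σ (a * b) = 0) : a = 0 := by
  by_contra ha
  exact hc (by simpa [← mul_assoc, mul_inv_cancel₀ ha] using h (a⁻¹ * c))

/-- Every finite-dimensional division algebra over a field is symmetric: it
admits a symmetrising form. -/
theorem division_algebra_is_symmetric
    (k : Type*) [Field k] (B : Type*) [DivisionRing B] [Algebra k B]
    [FiniteDimensional k B] :
    ∃ σ : B →ₗ[k] k,
      (∀ a b : B, σ (a * b) = σ (b * a)) ∧
      (∀ a : B, (∀ b : B, σ (a * b) = 0) → a = 0) := by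
  let Z := Subring.center B
  let : Algebra k Z := ((algebraMap k B).codRestrict _ fun c =>
    Subring.mem_center_iff.2 fun x => (Algebra.commutes c x).symm).toAlgebra
  have : IsScalarTower k Z B := .of_algebraMap_eq fun _ => rfl
  have : FiniteDimensional Z B := .right k Z B
  obtain ⟨T, hT, a, ha⟩ := IsAzumaya.exists_linearMap_mul_comm_ne_zero Z B
  obtain ⟨μ, hμ⟩ := Module.Projective.exists_dual_ne_zero k ha
  let σ := μ ∘ₗ T.restrictScalars k
  exact ⟨σ, fun x y => congrArg μ (hT x y),
    fun _ => DivisionRing.eq_zero_of_forall_apply_mul_eq_zero (σ := σ) hμ⟩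
end

section
/- Let k be a field, A a finite-dimensional semisimple k-algebra, and X, Y finite-dimensional left A-modules (with compatible k-structure). Then there is a k-linear isomorphism between Hom_A(X, Y) and the k-linear dual of Hom_A(Y, X); equivalently, there exists a k-bilinear pairing Hom_A(X, Y) × Hom_A(Y, X) → k which is nondegenerate in both arguments. -/
/-!
Decompose `X ≅ ∏ Sᵢ` and `Y ≅ ∏ Tⱼ` into simple modules. Then `Hom_A(X, Y) ≅ ∏ᵢⱼ Hom_A(Sᵢ, Tⱼ)`
and `Hom_A(Y, X) ≅ ∏ᵢⱼ Hom_A(Tⱼ, Sᵢ)` as `k`-spaces, and by Schur's lemma `Hom_A(S, T)` and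
`Hom_A(T, S)` are either both zero or both isomorphic to `End_A(S)`. Hence `Hom_A(X, Y)` is
`k`-isomorphic to `Hom_A(Y, X)`, which, being finite-dimensional, is isomorphic to its dual.
-/

section

variable {k A : Type*} [CommSemiring k] [Ring A] [Algebra k A]
  {X X' Y Y' : Type*} [AddCommGroup X] [Module A X] [Module k X] [IsScalarTower k A X]
  [AddCommGroup X'] [Module A X'] [Module k X'] [IsScalarTower k A X']
  [AddCommGroup Y] [Module A Y] [Module k Y] [IsScalarTower k A Y]
  [AddCommGroup Y'] [Module A Y'] [Module k Y'] [IsScalarTower k A Y']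

variable (k) in
def LinearEquiv.arrowCongrOfIsScalarTower (e₁ : X ≃ₗ[A] X') (e₂ : Y ≃ₗ[A] Y') :
    (X →ₗ[A] Y) ≃ₗ[k] (X' →ₗ[A] Y') where
  __ := e₁.arrowCongrAddEquiv e₂
  map_smul' c f := by ext; exact e₂.toLinearMap.map_smul_of_tower c _

theorem IsSimpleModule.subsingleton_linearMap_of_isEmpty_linearEquiv
    [IsSimpleModule A X] [IsSimpleModule A Y] (h : IsEmpty (X ≃ₗ[A] Y)) :
    Subsingleton (X →ₗ[A] Y) :=
  subsingleton_of_forall_eq 0 fun f ↦ by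
    by_contra hf
    exact h.false (.ofBijective f (LinearMap.bijective_of_ne_zero hf))

variable (k A X Y) in
theorem IsSimpleModule.nonempty_linearEquiv_linearMap_swap
    [IsSimpleModule A X] [IsSimpleModule A Y] :
    Nonempty ((X →ₗ[A] Y) ≃ₗ[k] (Y →ₗ[A] X)) := by
  obtain h | ⟨⟨e⟩⟩ := isEmpty_or_nonempty (X ≃ₗ[A] Y)
  · have := subsingleton_linearMap_of_isEmpty_linearEquiv h
    have := subsingleton_linearMap_of_isEmpty_linearEquiv
      (⟨fun e ↦ h.false e.symm⟩ : IsEmpty (Y ≃ₗ[A] X))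
    exact ⟨.ofSubsingleton _ _⟩
  · exact ⟨.arrowCongrOfIsScalarTower k e e.symm⟩

section Pi

variable {ι κ : Type*} [Fintype ι] [Fintype κ] [DecidableEq ι] [DecidableEq κ]
  {S : ι → Type*} [∀ i, AddCommGroup (S i)] [∀ i, Module A (S i)] [∀ i, Module k (S i)]
  [∀ i, IsScalarTower k A (S i)]
  {T : κ → Type*} [∀ j, AddCommGroup (T j)] [∀ j, Module A (T j)] [∀ j, Module k (T j)]
  [∀ j, IsScalarTower k A (T j)]

variable (k) in
theorem nonempty_linearEquiv_linearMap_pi_swap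
    (h : ∀ i j, Nonempty ((S i →ₗ[A] T j) ≃ₗ[k] (T j →ₗ[A] S i))) :
    Nonempty (((Π i, S i) →ₗ[A] Π j, T j) ≃ₗ[k] ((Π j, T j) →ₗ[A] Π i, S i)) :=
  ⟨(LinearMap.lsum A S k).symm ≪≫ₗ
    .piCongrRight (fun i ↦ (LinearEquiv.linearMapPi k).symm ≪≫ₗ
      (.piCongrRight fun j ↦ (h i j).some) ≪≫ₗ LinearMap.lsum A T k) ≪≫ₗ
    LinearEquiv.linearMapPi k⟩

end Pi

theorem IsSemisimpleModule.exists_linearEquiv_pi_simple [IsSemisimpleModule A X]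
    [Module.Finite A X] : ∃ (n : ℕ) (S : Fin n → Submodule A X) (_ : X ≃ₗ[A] Π i, S i),
      ∀ i, IsSimpleModule A (S i) := by
  obtain ⟨n, S, e, hS⟩ := IsSemisimpleModule.exists_linearEquiv_fin_dfinsupp A X
  exact ⟨n, S, e ≪≫ₗ DFinsupp.linearEquivFunOnFintype, hS⟩

variable (k A X Y) in
theorem IsSemisimpleModule.nonempty_linearEquiv_linearMap_swap
    [IsSemisimpleModule A X] [Module.Finite A X] [IsSemisimpleModule A Y] [Module.Finite A Y] :
    Nonempty ((X →ₗ[A] Y) ≃ₗ[k] (Y →ₗ[A] X)) := by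
  obtain ⟨m, S, eX, hS⟩ := exists_linearEquiv_pi_simple (A := A) (X := X)
  obtain ⟨n, T, eY, hT⟩ := exists_linearEquiv_pi_simple (A := A) (X := Y)
  obtain ⟨e⟩ := nonempty_linearEquiv_linearMap_pi_swap k fun i j ↦
    have := hS i; have := hT j; IsSimpleModule.nonempty_linearEquiv_linearMap_swap k A (S i) (T j)
  exact ⟨.arrowCongrOfIsScalarTower k eX eY ≪≫ₗ e ≪≫ₗ
    (LinearEquiv.arrowCongrOfIsScalarTower k eY eX).symm⟩

end

theorem LinearEquiv.nondegenerate_of_dual {K M N : Type*} [CommRing K]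
    [AddCommGroup M] [Module K M] [AddCommGroup N] [Module K N] [Module.Projective K N]
    (ψ : M ≃ₗ[K] Module.Dual K N) : (ψ : M →ₗ[K] N →ₗ[K] K).Nondegenerate :=
  ⟨fun x hx ↦ ψ.map_eq_zero_iff.mp (LinearMap.ext hx),
    fun y hy ↦ LinearMap.id_separatingRight y fun φ ↦ by simpa using hy (ψ.symm φ)⟩

theorem hom_dual_pairing_general
    (k : Type*) [Field k] (A : Type*) [Ring A] [Algebra k A]
    [IsSemisimpleRing A]
    (X : Type*) [AddCommGroup X] [Module A X] [Module k X]
    [IsScalarTower k A X] [FiniteDimensional k X]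
    (Y : Type*) [AddCommGroup Y] [Module A Y] [Module k Y]
    [IsScalarTower k A Y] [FiniteDimensional k Y] :
    ∃ β : (X →ₗ[A] Y) →ₗ[k] (Y →ₗ[A] X) →ₗ[k] k,
      (∀ f : X →ₗ[A] Y, (∀ g : Y →ₗ[A] X, β f g = 0) → f = 0) ∧
      (∀ g : Y →ₗ[A] X, (∀ f : X →ₗ[A] Y, β f g = 0) → g = 0) := by
  have := Module.Finite.of_restrictScalars_finite k A X
  have := Module.Finite.of_restrictScalars_finite k A Y
  obtain ⟨e⟩ := IsSemisimpleModule.nonempty_linearEquiv_linearMap_swap k A X Y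
  exact ⟨_, (e ≪≫ₗ (Module.finBasis k _).toDualEquiv).nondegenerate_of_dual⟩

/-- Over a finite-dimensional semisimple algebra `A` over a field `k`, for
finite-dimensional modules `X` and `Y` the spaces `Hom_A(X, Y)` and
`Hom_A(Y, X)` are naturally dual: there is a `k`-bilinear pairing
`Hom_A(X, Y) × Hom_A(Y, X) → k` which is nondegenerate in both arguments
(equivalently, `Hom_A(X, Y)` is `k`-linearly isomorphic to the dual of
`Hom_A(Y, X)`). -/
theorem hom_dual_pairing
    (k : Type*) [Field k] (A : Type*) [Ring A] [Algebra k A]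
    [FiniteDimensional k A] [IsSemisimpleRing A]
    (X : Type*) [AddCommGroup X] [Module A X] [Module k X]
    [IsScalarTower k A X] [FiniteDimensional k X]
    (Y : Type*) [AddCommGroup Y] [Module A Y] [Module k Y]
    [IsScalarTower k A Y] [FiniteDimensional k Y] :
    ∃ β : (X →ₗ[A] Y) →ₗ[k] (Y →ₗ[A] X) →ₗ[k] k,
      (∀ f : X →ₗ[A] Y, (∀ g : Y →ₗ[A] X, β f g = 0) → f = 0) ∧
      (∀ g : Y →ₗ[A] X, (∀ f : X →ₗ[A] Y, β f g = 0) → g = 0) :=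
  hom_dual_pairing_general k A X Y
end

section
/- Let k be a field, A a finite-dimensional semisimple k-algebra, and X, Y finite-dimensional left A-modules (with compatible k-structure). Then dim_k Hom_A(X, Y) = dim_k Hom_A(Y, X). -/
/-!
Both modules are finite direct sums of simple modules, and `Hom_A` turns finite direct sums in
either variable into products, so both sides are double sums of `dim_k Hom_A(S, T)` over simple
summands `S` of `X` and `T` of `Y`. By Schur's lemma `Hom_A(S, T) = 0 = Hom_A(T, S)` unless
`S ≅ T`, and an isomorphism `e : S ≅ T` gives `Hom_A(S, T) ≅ Hom_A(T, S)`, `f ↦ e⁻¹ ∘ f ∘ e⁻¹`.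
-/

open Module

namespace LinearEquiv

variable {R M N N' S : Type*} [Semiring R] [Semiring S] [AddCommMonoid M] [Module R M]
  [AddCommMonoid N] [Module R N] [Module S N] [SMulCommClass R S N]
  [AddCommMonoid N'] [Module R N'] [Module S N'] [SMulCommClass R S N']
  [LinearMap.CompatibleSMul N N' S R]

variable (M S) in
/-- Unlike `LinearEquiv.congrRight`, this is linear over a second ring of scalars `S`. -/
def congrRightOfCompatibleSMul (e : N ≃ₗ[R] N') : (M →ₗ[R] N) ≃ₗ[S] (M →ₗ[R] N') where
  __ := (LinearEquiv.refl R M).arrowCongrAddEquiv e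
  map_smul' c f := by ext; exact e.toLinearMap.map_smul_of_tower c _

end LinearEquiv

section

variable {k A : Type*} [Field k] [Ring A] [Algebra k A]

instance Submodule.finiteDimensional_of_isScalarTower {M : Type*} [AddCommGroup M] [Module A M]
    [Module k M] [IsScalarTower k A M] [FiniteDimensional k M] (p : Submodule A M) :
    FiniteDimensional k p :=
  .of_injective (p.subtype.restrictScalars k) p.injective_subtype

instance LinearMap.finiteDimensional_of_isScalarTower (M N : Type*)
    [AddCommGroup M] [Module A M] [Module k M] [IsScalarTower k A M]
    [FiniteDimensional k M] [AddCommGroup N] [Module A N] [Module k N] [IsScalarTower k A N]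
    [FiniteDimensional k N] : FiniteDimensional k (M →ₗ[A] N) :=
  .of_injective (LinearMap.restrictScalarsₗ k A M N k) (LinearMap.restrictScalars_injective k)

theorem subsingleton_linearMap_of_isEmpty_linearEquiv {S T : Type*} [AddCommGroup S] [Module A S]
    [AddCommGroup T] [Module A T] [IsSimpleModule A S] [IsSimpleModule A T]
    (h : IsEmpty (S ≃ₗ[A] T)) : Subsingleton (S →ₗ[A] T) :=
  subsingleton_of_forall_eq 0 fun f ↦ by_contra fun hf ↦
    h.false (.ofBijective f (LinearMap.bijective_of_ne_zero hf))

variable (k) in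
theorem finrank_linearMap_comm_of_isSimpleModule (S T : Type*)
    [AddCommGroup S] [Module A S] [Module k S] [IsScalarTower k A S] [IsSimpleModule A S]
    [AddCommGroup T] [Module A T] [Module k T] [IsScalarTower k A T] [IsSimpleModule A T] :
    finrank k (S →ₗ[A] T) = finrank k (T →ₗ[A] S) := by
  by_cases h : Nonempty (S ≃ₗ[A] T)
  · obtain ⟨e⟩ := h
    exact ((LinearEquiv.congrLeft T k e).trans
      (LinearEquiv.congrRightOfCompatibleSMul T k e.symm)).finrank_eq
  · have hST := subsingleton_linearMap_of_isEmpty_linearEquiv (not_nonempty_iff.mp h)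
    have hTS := subsingleton_linearMap_of_isEmpty_linearEquiv (S := T) (T := S)
      ⟨fun e ↦ h ⟨e.symm⟩⟩
    rw [finrank_zero_of_subsingleton, finrank_zero_of_subsingleton]

theorem finrank_linearMap_congr {M M' N N' : Type*} [AddCommGroup M] [Module A M]
    [AddCommGroup M'] [Module A M'] [AddCommGroup N] [Module A N] [Module k N]
    [IsScalarTower k A N] [AddCommGroup N'] [Module A N'] [Module k N'] [IsScalarTower k A N']
    (e₁ : M ≃ₗ[A] M') (e₂ : N ≃ₗ[A] N') :
    finrank k (M →ₗ[A] N) = finrank k (M' →ₗ[A] N') :=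
  ((LinearEquiv.congrLeft N k e₁).trans
    (LinearEquiv.congrRightOfCompatibleSMul M' k e₂)).finrank_eq

variable {ι : Type*} [Fintype ι] {M : ι → Type*} [∀ i, AddCommGroup (M i)]
  [∀ i, Module A (M i)] [∀ i, Module k (M i)] [∀ i, IsScalarTower k A (M i)]
  [∀ i, FiniteDimensional k (M i)]
  {N : Type*} [AddCommGroup N] [Module A N] [Module k N] [IsScalarTower k A N]
  [FiniteDimensional k N]

variable (k) in
theorem finrank_dfinsupp_linearMap [DecidableEq ι] :
    finrank k ((Π₀ i, M i) →ₗ[A] N) = ∑ i, finrank k (M i →ₗ[A] N) := by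
  rw [← (DFinsupp.lsum (R := A) (M := M) (N := N) k).finrank_eq, finrank_pi_fintype]

variable (k) in
theorem finrank_linearMap_dfinsupp :
    finrank k (N →ₗ[A] Π₀ i, M i) = ∑ i, finrank k (N →ₗ[A] M i) := by
  rw [(LinearEquiv.congrRightOfCompatibleSMul N k DFinsupp.linearEquivFunOnFintype).finrank_eq,
    ← (LinearEquiv.linearMapPi k).finrank_eq, finrank_pi_fintype]

end

theorem finrank_hom_symm_general
    (k : Type*) [Field k] (A : Type*) [Ring A] [Algebra k A]
    [IsSemisimpleRing A]
    (X : Type*) [AddCommGroup X] [Module A X] [Module k X]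
    [IsScalarTower k A X] [FiniteDimensional k X]
    (Y : Type*) [AddCommGroup Y] [Module A Y] [Module k Y]
    [IsScalarTower k A Y] [FiniteDimensional k Y] :
    Module.finrank k (X →ₗ[A] Y) = Module.finrank k (Y →ₗ[A] X) := by
  have := Module.Finite.of_restrictScalars_finite k A X
  have := Module.Finite.of_restrictScalars_finite k A Y
  obtain ⟨m, S, eX, hS⟩ := IsSemisimpleModule.exists_linearEquiv_fin_dfinsupp A X
  obtain ⟨n, T, eY, hT⟩ := IsSemisimpleModule.exists_linearEquiv_fin_dfinsupp A Y
  calc finrank k (X →ₗ[A] Y)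
      = ∑ i, ∑ j, finrank k (S i →ₗ[A] T j) := by
        rw [finrank_linearMap_congr eX eY, finrank_dfinsupp_linearMap]
        simp only [finrank_linearMap_dfinsupp]
    _ = ∑ j, ∑ i, finrank k (T j →ₗ[A] S i) := by
        rw [Finset.sum_comm]; simp only [finrank_linearMap_comm_of_isSimpleModule k (S _)]
    _ = finrank k (Y →ₗ[A] X) := by
        rw [finrank_linearMap_congr eY eX, finrank_dfinsupp_linearMap]
        simp only [finrank_linearMap_dfinsupp]

/-- Over a finite-dimensional semisimple algebra `A` over a field `k`, for
finite-dimensional modules `X` and `Y` we have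
`dim_k Hom_A(X, Y) = dim_k Hom_A(Y, X)`. -/
theorem finrank_hom_symm
    (k : Type*) [Field k] (A : Type*) [Ring A] [Algebra k A]
    [FiniteDimensional k A] [IsSemisimpleRing A]
    (X : Type*) [AddCommGroup X] [Module A X] [Module k X]
    [IsScalarTower k A X] [FiniteDimensional k X]
    (Y : Type*) [AddCommGroup Y] [Module A Y] [Module k Y]
    [IsScalarTower k A Y] [FiniteDimensional k Y] :
    Module.finrank k (X →ₗ[A] Y) = Module.finrank k (Y →ₗ[A] X) :=
  finrank_hom_symm_general k A X Y
end
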